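/- For every finite-dimensional ℂ[L]-module ρ, there is an isomorphism of ℂ[J]-modules ℂ[J]e_V e_U ⊗_{ℂ[L]} ρ ≅ ℂ[J]e_U e_V ⊗_{ℂ[L]} ρ (that is, i_{U,V}ρ ≅ i_{V,U}ρ). -/

import Mathlib

open scoped BigOperators

set_option maxHeartbeats 1000000
set_option synthInstance.maxHeartbeats 1000000

noncomputable section

namespace Parahoric

variable {G : Type*} [Group G]

/-- An Iwahori decomposition of the subgroup `I` of `G` as `I = W·M·W̄`:
`M` normalizes `W` and `W̄`, and the multiplication map `W × M × W̄ → I` is a bijection. -/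
def IwahoriDecomp (I W M Wb : Subgroup G) : Prop :=
  M ≤ Subgroup.normalizer (W : Set G) ∧ M ≤ Subgroup.normalizer (Wb : Set G) ∧
    Set.BijOn (fun q : G × G × G => q.1 * q.2.1 * q.2.2)
      ((W : Set G) ×ˢ (M : Set G) ×ˢ (Wb : Set G)) (I : Set G)

/-- The averaging idempotent `e_H = |H|⁻¹ ∑_{h ∈ H} h` in the group algebra `ℂ[G]`. -/
def algAvg (H : Subgroup G) [Finite H] : MonoidAlgebra ℂ G :=
  letI : Fintype H := Fintype.ofFinite H
  (Nat.card H : ℂ)⁻¹ • ∑ h : H, MonoidAlgebra.of ℂ G (h : G)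

/-- The canonical algebra embedding `ℂ[L] → ℂ[G]` for a subgroup `L ≤ G`. -/
def algMap (L : Subgroup G) : MonoidAlgebra ℂ ↥L →ₐ[ℂ] MonoidAlgebra ℂ G :=
  MonoidAlgebra.mapDomainAlgHom ℂ ℂ L.subtype

/-- `ℂ[G]·e`, the range of right multiplication by `e` on the group algebra. -/
def ralg (G : Type*) [Group G] (e : MonoidAlgebra ℂ G) : Submodule ℂ (MonoidAlgebra ℂ G) :=
  LinearMap.range (LinearMap.mulRight ℂ e)

section Reps

variable {W W₁ W₂ : Type*} [AddCommGroup W] [Module ℂ W]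
  [AddCommGroup W₁] [Module ℂ W₁] [AddCommGroup W₂] [Module ℂ W₂]

/-- A ℂ-submodule is stable under a representation. -/
def Stable (π : Representation ℂ G W) (S : Submodule ℂ W) : Prop :=
  ∀ g : G, ∀ x ∈ S, π g x ∈ S

/-- Irreducibility of a representation (equivalently, simplicity of the corresponding
`ℂ[G]`-module): the space is nonzero and has no nontrivial invariant subspaces. -/
def IsIrreducible (π : Representation ℂ G W) : Prop :=
  (⊤ : Submodule ℂ W) ≠ ⊥ ∧
    ∀ T : Submodule ℂ W, Stable π T → T = ⊥ ∨ T = ⊤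

/-- Irreducibility of an invariant subspace `S` of an ambient representation. -/
def IsIrreducibleSub (π : Representation ℂ G W) (S : Submodule ℂ W) : Prop :=
  S ≠ ⊥ ∧ ∀ T : Submodule ℂ W, T ≤ S → Stable π T → T = ⊥ ∨ T = S

/-- The space `Hom_G(ρ, τ)` of intertwining operators. -/
def repHom (ρ : Representation ℂ G W₁) (τ : Representation ℂ G W₂) :
    Submodule ℂ (W₁ →ₗ[ℂ] W₂) where
  carrier := {φ | ∀ (g : G) (x : W₁), φ (ρ g x) = τ g (φ x)}
  add_mem' := by
    intro φ ψ hφ hψ g x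
    simp [hφ g x, hψ g x]
  zero_mem' := by intro g x; simp
  smul_mem' := by
    intro c φ hφ g x
    simp [hφ g x]

/-- `Hom_G(ρ, τ|_T)` where the target is an invariant subspace `T` of `τ`. -/
def homFullSub (ρ : Representation ℂ G W₁) (τ : Representation ℂ G W₂)
    (T : Submodule ℂ W₂) : Submodule ℂ (W₁ →ₗ[ℂ] ↥T) where
  carrier := {φ | ∀ (g : G) (x : W₁), (φ (ρ g x) : W₂) = τ g ↑(φ x)}
  add_mem' := by
    intro φ ψ hφ hψ g x
    simp [hφ g x, hψ g x]
  zero_mem' := by intro g x; simp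
  smul_mem' := by
    intro c φ hφ g x
    simp [hφ g x]

/-- `Hom_G(ρ|_S, τ)` where the source is an invariant subspace `S` of `ρ`. -/
def homSubFull (ρ : Representation ℂ G W₁) (S : Submodule ℂ W₁)
    (τ : Representation ℂ G W₂) : Submodule ℂ (↥S →ₗ[ℂ] W₂) where
  carrier := {φ | ∀ (g : G) (x : S) (hx : ρ g ↑x ∈ S), φ ⟨ρ g ↑x, hx⟩ = τ g (φ x)}
  add_mem' := by
    intro φ ψ hφ hψ g x hx
    simp [hφ g x hx, hψ g x hx]
  zero_mem' := by intro g x hx; simp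
  smul_mem' := by
    intro c φ hφ g x hx
    simp [hφ g x hx]

/-- `Hom_G(ρ|_S, τ|_T)` between invariant subspaces. -/
def homSubSub (ρ : Representation ℂ G W₁) (S : Submodule ℂ W₁)
    (τ : Representation ℂ G W₂) (T : Submodule ℂ W₂) : Submodule ℂ (↥S →ₗ[ℂ] ↥T) where
  carrier := {φ | ∀ (g : G) (x : S) (hx : ρ g ↑x ∈ S), (φ ⟨ρ g ↑x, hx⟩ : W₂) = τ g ↑(φ x)}
  add_mem' := by
    intro φ ψ hφ hψ g x hx
    simp [hφ g x hx, hψ g x hx]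
  zero_mem' := by intro g x hx; simp
  smul_mem' := by
    intro c φ hφ g x hx
    simp [hφ g x hx]

/-- Isomorphism of representations. -/
def IsoRep (ρ : Representation ℂ G W₁) (τ : Representation ℂ G W₂) : Prop :=
  ∃ e : W₁ ≃ₗ[ℂ] W₂, ∀ (g : G) (x : W₁), e (ρ g x) = τ g (e x)

/-- Equivariant isomorphism from a representation onto an invariant subspace. -/
def IsoFullSub (ρ : Representation ℂ G W₁) (τ : Representation ℂ G W₂)
    (T : Submodule ℂ W₂) : Prop :=
  ∃ e : W₁ ≃ₗ[ℂ] ↥T, ∀ (g : G) (x : W₁), (e (ρ g x) : W₂) = τ g ↑(e x)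

/-- Equivariant isomorphism from an invariant subspace onto a representation. -/
def IsoSubFull (ρ : Representation ℂ G W₁) (S : Submodule ℂ W₁)
    (τ : Representation ℂ G W₂) : Prop :=
  ∃ e : ↥S ≃ₗ[ℂ] W₂, ∀ (g : G) (x : S) (hx : ρ g ↑x ∈ S), e ⟨ρ g ↑x, hx⟩ = τ g (e x)

/-- Equivariant isomorphism between invariant subspaces. -/
def IsoSubSub (ρ : Representation ℂ G W₁) (S : Submodule ℂ W₁)
    (τ : Representation ℂ G W₂) (T : Submodule ℂ W₂) : Prop :=
  ∃ e : ↥S ≃ₗ[ℂ] ↥T, ∀ (g : G) (x : S) (hx : ρ g ↑x ∈ S),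
    (e ⟨ρ g ↑x, hx⟩ : W₂) = τ g ↑(e x)

/-- The operator `π(e_H) = |H|⁻¹ ∑_{h ∈ H} π(h)`. -/
def avgMap (π : Representation ℂ G W) (H : Subgroup G) [Finite H] : W →ₗ[ℂ] W :=
  letI : Fintype H := Fintype.ofFinite H
  (Nat.card H : ℂ)⁻¹ • ∑ h : H, π (h : G)

/-- The subspace `W^H` of `H`-fixed vectors. -/
def fixedSub (π : Representation ℂ G W) (H : Subgroup G) : Submodule ℂ W where
  carrier := {w | ∀ h ∈ H, π h w = w}
  add_mem' := by
    intro a b ha hb h hh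
    simp [ha h hh, hb h hh]
  zero_mem' := by intro h hh; simp
  smul_mem' := by
    intro c a ha h hh
    simp [ha h hh]

/-- Restriction of a representation to a subgroup. -/
def resRep (π : Representation ℂ G W) (L : Subgroup G) : Representation ℂ ↥L W :=
  π.comp L.subtype

/-- The right-translation representation of `G` on the function space `G → W`. -/
def rtRep (G : Type*) [Group G] (W : Type*) [AddCommGroup W] [Module ℂ W] :
    Representation ℂ G (G → W) where
  toFun g :=
    { toFun := fun f x => f (x * g)
      map_add' := fun _ _ => rfl
      map_smul' := fun _ _ => rfl }
  map_one' := LinearMap.ext fun f => funext fun x => by simp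
  map_mul' := fun g₁ g₂ => LinearMap.ext fun f => funext fun x => by
    simp [mul_assoc]

/-- The left-translation representation of `G` on the function space `G → W`. -/
def ltRep (G : Type*) [Group G] (W : Type*) [AddCommGroup W] [Module ℂ W] :
    Representation ℂ G (G → W) where
  toFun g :=
    { toFun := fun f x => f (g⁻¹ * x)
      map_add' := fun _ _ => rfl
      map_smul' := fun _ _ => rfl }
  map_one' := LinearMap.ext fun f => funext fun x => by simp
  map_mul' := fun g₁ g₂ => LinearMap.ext fun f => funext fun x => by
    simp [mul_assoc]

/-- Left translation by a fixed group element, as a linear operator on `G → W`. -/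
def lTrans (W : Type*) [AddCommGroup W] [Module ℂ W] (g : G) : (G → W) →ₗ[ℂ] (G → W) where
  toFun f := fun x => f (g * x)
  map_add' := fun _ _ => rfl
  map_smul' := fun _ _ => rfl

/-- The averaging operator `I_U : f ↦ (j ↦ |U|⁻¹ ∑_{u ∈ U} f(u·j))` on `G → W`. -/
def avgL (U : Subgroup G) [Finite U] (W : Type*) [AddCommGroup W] [Module ℂ W] :
    (G → W) →ₗ[ℂ] (G → W) :=
  letI : Fintype U := Fintype.ofFinite U
  (Nat.card U : ℂ)⁻¹ • ∑ u : U, lTrans W (u : G)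

/-- The module `Ind_{LU}^G (infl_L^{LU} ρ)` of functions `f : G → W` with
`f(u·l·g) = ρ(l)·f(g)` for `u ∈ U`, `l ∈ L`; `G` acts by right translation (`rtRep`).
This is the standard concrete model of `ℂ[G]·e_U ⊗_{ℂ[L]} ρ`. -/
def indInfl (U L : Subgroup G) {W : Type*} [AddCommGroup W] [Module ℂ W]
    (ρ : Representation ℂ ↥L W) : Submodule ℂ (G → W) where
  carrier := {f | ∀ (u l g : G) (hu : u ∈ U) (hl : l ∈ L),
    f (u * l * g) = ρ ⟨l, hl⟩ (f g)}
  add_mem' := by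
    intro f₁ f₂ h₁ h₂ u l g hu hl
    simp [h₁ u l g hu hl, h₂ u l g hu hl]
  zero_mem' := by intro u l g hu hl; simp
  smul_mem' := by
    intro c f hf u l g hu hl
    simp [hf u l g hu hl]

/-- Parahoric induction `i_{U,V} ρ = ℂ[G]e_V e_U ⊗_{ℂ[L]} ρ`, realized concretely as the
image of the averaging operator `I_U` on `Ind_{LV}^G (infl ρ)`; `G` acts by `rtRep`. -/
def parInd (U L V : Subgroup G) [Finite U] {W : Type*} [AddCommGroup W] [Module ℂ W]
    (ρ : Representation ℂ ↥L W) : Submodule ℂ (G → W) :=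
  (indInfl V L ρ).map (avgL U W)

/-- Parahoric restriction `r_{U,V} π`: the image of the operator `π(e_U)·π(e_V)`. -/
def parRes (π : Representation ℂ G W) (U V : Subgroup G) [Finite U] [Finite V] :
    Submodule ℂ W :=
  LinearMap.range (avgMap π U ∘ₗ avgMap π V)

/-- Conjugation `l ↦ w·l·w⁻¹` as an endomorphism of a subgroup `L` normalized by `w`. -/
def conjHom (L : Subgroup G) (w : G) (hw : ∀ l ∈ L, w * l * w⁻¹ ∈ L) : ↥L →* ↥L where
  toFun l := ⟨w * ↑l * w⁻¹, hw ↑l l.2⟩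
  map_one' := by ext; simp
  map_mul' := fun a b => by ext; simp [mul_assoc]

/-- External direct sum of two representations of the same group. -/
def pairRep (ρ : Representation ℂ G W₁) (τ : Representation ℂ G W₂) :
    Representation ℂ G (W₁ × W₂) where
  toFun g := (ρ g).prodMap (τ g)
  map_one' := by ext x <;> simp
  map_mul' := fun g₁ g₂ => by ext x <;> simp

/-- The induced module `ℂ[G] ⊗_{ℂ[J]} W` (for `J ≤ G` of finite index this is all of the
induced module; in general, its "compactly induced" variant is `cInd`): functions
`f : G → W` with `f(g·j) = π(j)⁻¹ f(g)`, the action of `G` being left translation. -/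
def indUp (J : Subgroup G) {W : Type*} [AddCommGroup W] [Module ℂ W]
    (π : Representation ℂ ↥J W) : Submodule ℂ (G → W) where
  carrier := {f | ∀ (g : G) (j : ↥J), f (g * ↑j) = π j⁻¹ (f g)}
  add_mem' := by
    intro f₁ f₂ h₁ h₂ g j
    simp [h₁ g j, h₂ g j]
  zero_mem' := by intro g j; simp
  smul_mem' := by
    intro c f hf g j
    simp [hf g j]

/-- The induced module `ℂ[G] ⊗_{ℂ[J]} W` for an arbitrary subgroup `J` of a (possibly
infinite) group `G`: functions `f : G → W` with `f(g·j) = π(j)⁻¹ f(g)` supported on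
finitely many cosets `g·J`; the action of `G` is left translation (`ltRep`). -/
def cInd (J : Subgroup G) {W : Type*} [AddCommGroup W] [Module ℂ W]
    (π : Representation ℂ ↥J W) : Submodule ℂ (G → W) where
  carrier := {f | (∀ (g : G) (j : ↥J), f (g * ↑j) = π j⁻¹ (f g)) ∧
    ∃ S : Set G, S.Finite ∧ ∀ g : G, f g ≠ 0 → ∃ s ∈ S, ∃ j : ↥J, g = s * ↑j}
  add_mem' := by
    rintro f₁ f₂ ⟨h₁, S₁, hS₁, hS₁'⟩ ⟨h₂, S₂, hS₂, hS₂'⟩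
    refine ⟨fun g j => by simp [h₁ g j, h₂ g j], S₁ ∪ S₂, hS₁.union hS₂, fun g hg => ?_⟩
    by_cases hf₁ : f₁ g = 0
    · have hf₂ : f₂ g ≠ 0 := by
        intro h
        exact hg (by simp [Pi.add_apply, hf₁, h])
      obtain ⟨s, hs, j, hj⟩ := hS₂' g hf₂
      exact ⟨s, Set.mem_union_right _ hs, j, hj⟩
    · obtain ⟨s, hs, j, hj⟩ := hS₁' g hf₁
      exact ⟨s, Set.mem_union_left _ hs, j, hj⟩
  zero_mem' := by
    refine ⟨fun g j => by simp, ∅, Set.finite_empty, fun g hg => absurd rfl hg⟩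
  smul_mem' := by
    rintro c f ⟨h, S, hS, hS'⟩
    refine ⟨fun g j => by simp [h g j], S, hS, fun g hg => ?_⟩
    apply hS'
    intro h0
    exact hg (by simp [Pi.smul_apply, h0])

/-- The space of functions `f : J → ℂ` with `f(b·g) = χ(b)·f(g)`: the concrete model of the
induced representation `Ind_B^J χ` of a one-dimensional character, `J` acting by `rtRep`. -/
def indChar {J : Type*} [Group J] (B : Subgroup J) (χ : ↥B →* ℂˣ) :
    Submodule ℂ (J → ℂ) where
  carrier := {f | ∀ (b : ↥B) (g : J), f (↑b * g) = (χ b : ℂ) * f g}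
  add_mem' := by
    intro f₁ f₂ h₁ h₂ b g
    simp [h₁ b g, h₂ b g, mul_add]
  zero_mem' := by intro b g; simp
  smul_mem' := by
    intro c f hf b g
    simp [hf b g]
    ring

/-- The space `Hom_{J ∩ t⁻¹Jt}(π, π^t)` of linear maps `φ` with
`φ ∘ π(x) = π(t·x·t⁻¹) ∘ φ` for all `x ∈ J ∩ t⁻¹Jt`. -/
def twistedIntertwiners {W : Type*} [AddCommGroup W] [Module ℂ W]
    (J : Subgroup G) (π : Representation ℂ ↥J W) (t : G) :
    Submodule ℂ (W →ₗ[ℂ] W) where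
  carrier := {φ | ∀ (x : G) (hx : x ∈ J) (hx' : t * x * t⁻¹ ∈ J),
    φ ∘ₗ π ⟨x, hx⟩ = π ⟨t * x * t⁻¹, hx'⟩ ∘ₗ φ}
  add_mem' := by
    intro φ ψ hφ hψ x hx hx'
    simp only [LinearMap.add_comp, LinearMap.comp_add, hφ x hx hx', hψ x hx hx']
  zero_mem' := by intro x hx hx'; simp
  smul_mem' := by
    intro c φ hφ x hx hx'
    simp only [LinearMap.smul_comp, LinearMap.comp_smul, hφ x hx hx']

/-- The dimension `dim_ℂ S` of a subspace `S` (e.g. of a space of intertwining maps). -/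
def dimC {M : Type*} [AddCommGroup M] [Module ℂ M] (S : Submodule ℂ M) : ℕ :=
  Module.finrank ℂ ↥S

/-- Finite-dimensionality of a subspace over `ℂ`. -/
def IsFinDimSub {M : Type*} [AddCommGroup M] [Module ℂ M] (S : Submodule ℂ M) : Prop :=
  FiniteDimensional ℂ ↥S

end Reps

/-!
Averaging over `V` maps `i_{U,V} ρ` into `i_{V,U} ρ` because `L` normalizes `U` and `V`, and it
commutes with right translations. It is injective there: averaging operators are self-adjoint
idempotents for the standard Hermitian product on `J → ℂ`, so for `g` fixed by `e_V`,
`|e_U g|² = ⟨e_V g, e_U g⟩ = ⟨g, e_V e_U g⟩`, which vanishes if `e_V e_U g = 0` (vector-valued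
functions reduce to scalar ones through linear functionals on `W`). By symmetry the two
finite-dimensional spaces have equal dimension, so averaging over `V` is an isomorphism.
-/

section Averaging

variable {W : Type*} [AddCommGroup W] [Module ℂ W] {H : Subgroup G}

theorem avgL_apply [Fintype H] (f : G → W) (x : G) :
    avgL H W f x = (Nat.card H : ℂ)⁻¹ • ∑ h : H, f (h * x) := by
  rw [avgL, Subsingleton.elim (Fintype.ofFinite H) ‹Fintype H›]
  simp [lTrans]

variable [Finite H]

theorem avgL_eq_self {f : G → W} (hf : ∀ h ∈ H, ∀ x, f (h * x) = f x) : avgL H W f = f := by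
  cases nonempty_fintype H
  funext x
  have hcard : (Nat.card H : ℂ) ≠ 0 := Nat.cast_ne_zero.mpr Nat.card_pos.ne'
  simp only [avgL_apply, fun h : H => hf h h.2 x, Finset.sum_const, Finset.card_univ,
    ← Nat.card_eq_fintype_card, ← Nat.cast_smul_eq_nsmul ℂ, smul_smul, inv_mul_cancel₀ hcard,
    one_smul]

theorem avgL_mul_left (f : G → W) {h : G} (hh : h ∈ H) (x : G) :
    avgL H W f (h * x) = avgL H W f x := by
  cases nonempty_fintype H
  simp only [avgL_apply, ← mul_assoc]
  congr 1
  exact Fintype.sum_equiv (Equiv.mulRight ⟨h, hh⟩) _ _ fun _ => rfl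

theorem avgL_avgL (f : G → W) : avgL H W (avgL H W f) = avgL H W f :=
  avgL_eq_self fun _ hh x => avgL_mul_left f hh x

theorem avgL_rtRep (f : G → W) (g : G) :
    avgL H W (rtRep G W g f) = rtRep G W g (avgL H W f) := by
  cases nonempty_fintype H
  funext x
  simp only [avgL_apply, rtRep, MonoidHom.coe_mk, OneHom.coe_mk, LinearMap.coe_mk,
    AddHom.coe_mk, mul_assoc]

theorem avgL_comp {W' : Type*} [AddCommGroup W'] [Module ℂ W'] (φ : W →ₗ[ℂ] W') (f : G → W) :
    avgL H W' (φ ∘ f) = φ ∘ avgL H W f := by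
  cases nonempty_fintype H
  funext x
  simp [avgL_apply]

theorem avgL_mul_left_of_mem_normalizer {f : G → W} {l : G}
    (hl : l ∈ Subgroup.normalizer (H : Set G)) {T : W →ₗ[ℂ] W} (hf : ∀ y, f (l * y) = T (f y))
    (x : G) : avgL H W f (l * x) = T (avgL H W f x) := by
  cases nonempty_fintype H
  let conj : H ≃ H :=
    (MulAut.conj l).toEquiv.subtypeEquiv fun h => Subgroup.mem_normalizer_iff.mp hl h
  have hsum : ∑ h : H, f (h * (l * x)) = ∑ h : H, f ((conj h : G) * (l * x)) :=
    (Equiv.sum_comp conj _).symm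
  simp only [avgL_apply, hsum, map_smul, map_sum, ← hf]
  congr 2 with h
  simp [conj, mul_assoc]

end Averaging

section SelfAdjoint

variable [Fintype G]

theorem star_avgL_dotProduct (H : Subgroup G) [Finite H] (f g : G → ℂ) :
    star (avgL H ℂ f) ⬝ᵥ g = star f ⬝ᵥ avgL H ℂ g := by
  cases nonempty_fintype H
  have htrans (h : G) : ∑ x, star (f (h * x)) * g x = ∑ x, star (f x) * g (h⁻¹ * x) :=
    Fintype.sum_equiv (Equiv.mulLeft h) _ _ fun x => by simp
  calc star (avgL H ℂ f) ⬝ᵥ g = (Nat.card H : ℂ)⁻¹ * ∑ h : H, ∑ x, star (f (h * x)) * g x := by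
        simp only [dotProduct, Pi.star_apply, avgL_apply, smul_eq_mul, star_mul', star_sum,
          star_inv₀, star_natCast, Finset.mul_sum, Finset.sum_mul, mul_assoc]
        exact Finset.sum_comm
    _ = (Nat.card H : ℂ)⁻¹ * ∑ h : H, ∑ x, star (f x) * g ((h : G)⁻¹ * x) := by
        simp only [htrans]
    _ = (Nat.card H : ℂ)⁻¹ * ∑ h : H, ∑ x, star (f x) * g (h * x) := by
        congr 1
        exact Fintype.sum_equiv (Equiv.inv H) _ _ fun _ => by simp
    _ = star f ⬝ᵥ avgL H ℂ g := by
        simp only [dotProduct, Pi.star_apply, avgL_apply, smul_eq_mul, Finset.mul_sum,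
          mul_left_comm _ (Nat.card H : ℂ)⁻¹]
        exact Finset.sum_comm

open scoped ComplexOrder in
theorem avgL_eq_zero_of_avgL_avgL_eq_zero_scalar {U V : Subgroup G} [Finite U] [Finite V]
    {g : G → ℂ} (hg : avgL V ℂ g = g) (h : avgL V ℂ (avgL U ℂ g) = 0) : avgL U ℂ g = 0 := by
  rw [← dotProduct_star_self_eq_zero]
  calc star (avgL U ℂ g) ⬝ᵥ avgL U ℂ g = star g ⬝ᵥ avgL U ℂ g := by
        rw [star_avgL_dotProduct, avgL_avgL]
    _ = star (avgL V ℂ g) ⬝ᵥ avgL U ℂ g := by rw [hg]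
    _ = 0 := by rw [star_avgL_dotProduct, h, dotProduct_zero]

theorem avgL_eq_zero_of_avgL_avgL_eq_zero {W : Type*} [AddCommGroup W] [Module ℂ W]
    {U V : Subgroup G} [Finite U] [Finite V] {g : G → W} (hg : avgL V W g = g)
    (h : avgL V W (avgL U W g) = 0) : avgL U W g = 0 := by
  funext x
  refine (Module.forall_dual_apply_eq_zero_iff ℂ _).mp fun φ => ?_
  have hφ : avgL U ℂ (φ ∘ g) = 0 := by
    refine avgL_eq_zero_of_avgL_avgL_eq_zero_scalar (V := V) ?_ ?_
    · rw [avgL_comp, hg]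
    · rw [avgL_comp, avgL_comp, h]
      exact funext fun _ => map_zero φ
  rw [avgL_comp] at hφ
  exact congrFun hφ x

end SelfAdjoint

section ParahoricInduction

variable {W : Type*} [AddCommGroup W] [Module ℂ W] {U L V : Subgroup G}
  {ρ : Representation ℂ L W} {f : G → W}

theorem apply_mul_left_of_mem_indInfl (hf : f ∈ indInfl V L ρ) {l : G} (hl : l ∈ L) (y : G) :
    f (l * y) = ρ ⟨l, hl⟩ (f y) := by
  simpa using hf 1 l y V.one_mem hl

theorem apply_mul_left_eq_of_mem_indInfl (hf : f ∈ indInfl V L ρ) {v : G} (hv : v ∈ V)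
    (y : G) : f (v * y) = f y := by
  have h := hf v 1 y hv L.one_mem
  rwa [mul_one, show (⟨1, L.one_mem⟩ : L) = 1 from rfl, map_one, Module.End.one_apply] at h

theorem avgL_mem_indInfl [Finite U] (hN : L ≤ Subgroup.normalizer (U : Set G))
    (hf : ∀ l (hl : l ∈ L) y, f (l * y) = ρ ⟨l, hl⟩ (f y)) : avgL U W f ∈ indInfl U L ρ := by
  intro u l y hu hl
  rw [mul_assoc, avgL_mul_left f hu, avgL_mul_left_of_mem_normalizer (hN hl) (hf l hl)]

theorem parInd_le_indInfl [Finite U] (hN : L ≤ Subgroup.normalizer (U : Set G)) :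
    parInd U L V ρ ≤ indInfl U L ρ := by
  rintro _ ⟨f, hf, rfl⟩
  exact avgL_mem_indInfl hN fun l hl y => apply_mul_left_of_mem_indInfl hf hl y

theorem avgL_mem_parInd [Finite U] [Finite V] (hN : L ≤ Subgroup.normalizer (U : Set G))
    (hf : f ∈ parInd U L V ρ) : avgL V W f ∈ parInd V L U ρ :=
  Submodule.mem_map_of_mem (parInd_le_indInfl hN hf)

theorem eq_zero_of_mem_parInd_of_avgL_eq_zero [Fintype G] [Finite U] [Finite V]
    (hf : f ∈ parInd U L V ρ) (h : avgL V W f = 0) : f = 0 := by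
  obtain ⟨g, hg, rfl⟩ := hf
  exact avgL_eq_zero_of_avgL_avgL_eq_zero
    (avgL_eq_self fun _ hv y => apply_mul_left_eq_of_mem_indInfl hg hv y) h

variable [Finite U] [Finite V]

/-- The map `i_{U,V} ρ → i_{V,U} ρ` given by right multiplication with `e_V`. -/
def parIndSwap (hN : L ≤ Subgroup.normalizer (U : Set G)) :
    parInd U L V ρ →ₗ[ℂ] parInd V L U ρ :=
  (avgL V W).restrict fun _ => avgL_mem_parInd hN

theorem parIndSwap_injective [Fintype G] (hN : L ≤ Subgroup.normalizer (U : Set G)) :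
    Function.Injective (parIndSwap (ρ := ρ) (V := V) hN) := by
  rw [← LinearMap.ker_eq_bot, LinearMap.ker_eq_bot']
  intro f hf
  exact Subtype.ext (eq_zero_of_mem_parInd_of_avgL_eq_zero f.2 (congrArg Subtype.val hf))

end ParahoricInduction

section Statement5

variable {J : Type*} [Group J] [Fintype J]

/-- Let `J = ULV` be a finite group with an Iwahori decomposition.  For every
finite-dimensional `ℂ[L]`-module `ρ` there is an isomorphism of `ℂ[J]`-modules
`i_{U,V}ρ = ℂ[J]e_V e_U ⊗_{ℂ[L]} ρ ≅ ℂ[J]e_U e_V ⊗_{ℂ[L]} ρ = i_{V,U}ρ`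
(each side realized concretely as the image of an averaging operator inside an
induced module). -/
theorem parInd_swap_iso
    (U L V : Subgroup J) (hIw : IwahoriDecomp (⊤ : Subgroup J) U L V)
    {W : Type*} [AddCommGroup W] [Module ℂ W] [FiniteDimensional ℂ W]
    (ρ : Representation ℂ ↥L W) :
    IsoSubSub (rtRep J W) (parInd U L V ρ) (rtRep J W) (parInd V L U ρ) := by
  obtain ⟨hNU, hNV, -⟩ := hIw
  have hUV := parIndSwap_injective (ρ := ρ) (V := V) hNU
  have hVU := parIndSwap_injective (ρ := ρ) (V := U) hNV
  have hdim := le_antisymm (LinearMap.finrank_le_finrank_of_injective hUV)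
    (LinearMap.finrank_le_finrank_of_injective hVU)
  refine ⟨(parIndSwap hNU).linearEquivOfInjective hUV hdim, fun g f _ => ?_⟩
  exact avgL_rtRep f.1 g

end Statement5

end Parahoric
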